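/- arXiv:1611.06406 — 2 statements merged into one kernel-verified Lean document; each statement's English description precedes it below -/
import Mathlib

section
/- Let a ∈ W₁ (Wiener class with derivative in the Wiener class) and write T(a)^i = T(a^i) + E_i for i ≥ 1, where E_1 = 0 and E_i = T(a)E_{i−1} − H(a⁻)H((a^{i−1})⁺) for i ≥ 2. Then ‖E_i‖_F ≤ (i(i−1)/2) ‖a'‖_W² ‖a‖_W^{i−2}. -/
/-- The semi-infinite Toeplitz matrix `T(a) = (a_{j-i})`, 0-based indices. -/
def Toep (a : ℤ → ℂ) : ℕ → ℕ → ℂ := fun i j => a ((j : ℤ) - i)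

/-- Hankel matrix `H(a⁺) = (a_{i+j-1})`, 0-based indices. -/
def HankP (a : ℤ → ℂ) : ℕ → ℕ → ℂ := fun i j => a ((i : ℤ) + j + 1)

/-- Hankel matrix `H(a⁻) = (a_{-i-j+1})`, 0-based indices. -/
def HankM (a : ℤ → ℂ) : ℕ → ℕ → ℂ := fun i j => a (-((i : ℤ) + j + 1))

/-- Product of two semi-infinite matrices. -/
noncomputable def tMul (A B : ℕ → ℕ → ℂ) : ℕ → ℕ → ℂ := fun i j => ∑' k : ℕ, A i k * B k j

/-- Coefficients of the power `a(z)^n` (bilateral convolution power). -/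
noncomputable def convPow (a : ℤ → ℂ) : ℕ → ℤ → ℂ
  | 0 => fun k => if k = 0 then 1 else 0
  | n + 1 => fun k => ∑' i : ℤ, a i * convPow a n (k - i)

/-- Entrywise ℓ¹ norm `‖·‖_F` of a semi-infinite matrix. -/
noncomputable def fNorm (E : ℕ → ℕ → ℂ) : ℝ := ∑' p : ℕ × ℕ, ‖E p.1 p.2‖

/-- Wiener norm `‖a‖_W = ∑|a_i|`. -/
noncomputable def wNorm (a : ℤ → ℂ) : ℝ := ∑' i : ℤ, ‖a i‖

/-- Norm of the derivative: `‖a'‖_W = ∑ |i|·|a_i|`. -/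
noncomputable def dNorm (a : ℤ → ℂ) : ℝ := ∑' i : ℤ, |(i : ℝ)| * ‖a i‖

/-!
Induct on `i` through the recursion for `E_i`. Every column of `T(a)` has ℓ¹ norm at most
`‖a‖_W`, so `‖T(a)E‖_F ≤ ‖a‖_W ‖E‖_F`. In `H(a⁻)H(b⁺)` the `k`-th column of `H(a⁻)` and the
`k`-th row of `H(b⁺)` are tails of `a⁻` and `b⁺`; the tails of `a⁻` summed over `k` count
`|a_{-m}|` exactly `m` times, whence `‖H(a⁻)H(b⁺)‖_F ≤ ‖a'‖_W ‖b'‖_W`. The Leibniz rule for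
convolutions gives `‖(a^k)'‖_W ≤ k ‖a‖_W^{k-1} ‖a'‖_W`, so
`‖E_i‖_F ≤ ‖a‖_W ‖E_{i-1}‖_F + (i-1) ‖a'‖_W² ‖a‖_W^{i-2}`, which sums to
`C(i,2) ‖a'‖_W² ‖a‖_W^{i-2}`.
-/

open scoped ENNReal

/- The estimates are made for `ℝ≥0∞`-valued norms, where no summability has to be tracked.
`toReal` recovers `wNorm`, `dNorm`, `fNorm` unconditionally: a divergent series has `tsum` `0`
in `ℝ` and `⊤` in `ℝ≥0∞`. -/
noncomputable def eWNorm (a : ℤ → ℂ) : ℝ≥0∞ := ∑' i, ‖a i‖ₑ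

noncomputable def eDNorm (a : ℤ → ℂ) : ℝ≥0∞ := ∑' i, ‖i‖ₑ * ‖a i‖ₑ

noncomputable def eFNorm (B : ℕ → ℕ → ℂ) : ℝ≥0∞ := ∑' p : ℕ × ℕ, ‖B p.1 p.2‖ₑ

noncomputable def seqConv (a b : ℤ → ℂ) : ℤ → ℂ := fun m => ∑' i, a i * b (m - i)

section Conv

variable (a b : ℤ → ℂ)

lemma tsum_mul_enorm_seqConv_le (w : ℤ → ℝ≥0∞) :
    ∑' m, w m * ‖seqConv a b m‖ₑ ≤ ∑' i, ∑' j, w (i + j) * (‖a i‖ₑ * ‖b j‖ₑ) :=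
  calc ∑' m, w m * ‖seqConv a b m‖ₑ
      ≤ ∑' m, ∑' i, w m * (‖a i‖ₑ * ‖b (m - i)‖ₑ) := by
        refine ENNReal.tsum_le_tsum fun m => ?_
        rw [ENNReal.tsum_mul_left]
        gcongr
        simpa only [seqConv, enorm_mul] using
          enorm_tsum_le_tsum_enorm (f := fun i => a i * b (m - i))
    _ = ∑' i, ∑' j, w (i + j) * (‖a i‖ₑ * ‖b j‖ₑ) := by
        rw [ENNReal.tsum_comm]
        refine tsum_congr fun i => ?_
        rw [← (Equiv.addLeft i).tsum_eq]
        simp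

lemma eWNorm_seqConv_le : eWNorm (seqConv a b) ≤ eWNorm a * eWNorm b := by
  simpa [eWNorm, ENNReal.tsum_mul_left, ENNReal.tsum_mul_right] using
    tsum_mul_enorm_seqConv_le a b 1

lemma eDNorm_seqConv_le :
    eDNorm (seqConv a b) ≤ eDNorm a * eWNorm b + eWNorm a * eDNorm b :=
  calc eDNorm (seqConv a b)
      ≤ ∑' i, ∑' j, ‖i + j‖ₑ * (‖a i‖ₑ * ‖b j‖ₑ) := tsum_mul_enorm_seqConv_le a b _
    _ ≤ ∑' i, ∑' j, (‖i‖ₑ * ‖a i‖ₑ * ‖b j‖ₑ + ‖a i‖ₑ * (‖j‖ₑ * ‖b j‖ₑ)) := by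
        gcongr with i j
        calc ‖i + j‖ₑ * (‖a i‖ₑ * ‖b j‖ₑ) ≤ (‖i‖ₑ + ‖j‖ₑ) * (‖a i‖ₑ * ‖b j‖ₑ) := by
              gcongr; exact enorm_add_le i j
          _ = _ := by ring
    _ = eDNorm a * eWNorm b + eWNorm a * eDNorm b := by
        simp only [ENNReal.tsum_add, ENNReal.tsum_mul_left, ENNReal.tsum_mul_right, eDNorm,
          eWNorm]

lemma convPow_succ (n : ℕ) : convPow a (n + 1) = seqConv a (convPow a n) := rfl

lemma eWNorm_convPow_zero : eWNorm (convPow a 0) = 1 := by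
  simp [eWNorm, convPow, apply_ite]

lemma eDNorm_convPow_zero : eDNorm (convPow a 0) = 0 := by
  simp [eDNorm, convPow, apply_ite]

lemma eWNorm_convPow_le (n : ℕ) : eWNorm (convPow a n) ≤ eWNorm a ^ n := by
  induction n with
  | zero => rw [eWNorm_convPow_zero, pow_zero]
  | succ n ih =>
    calc eWNorm (convPow a (n + 1)) ≤ eWNorm a * eWNorm (convPow a n) := by
          rw [convPow_succ]; exact eWNorm_seqConv_le a (convPow a n)
      _ ≤ eWNorm a ^ (n + 1) := by rw [pow_succ']; gcongr

lemma eDNorm_convPow_le (n : ℕ) :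
    eDNorm (convPow a (n + 1)) ≤ (n + 1) * eWNorm a ^ n * eDNorm a := by
  induction n with
  | zero =>
    simpa [convPow_succ, eWNorm_convPow_zero, eDNorm_convPow_zero] using
      eDNorm_seqConv_le a (convPow a 0)
  | succ n ih =>
    calc eDNorm (convPow a (n + 2))
        ≤ eDNorm a * eWNorm (convPow a (n + 1)) + eWNorm a * eDNorm (convPow a (n + 1)) := by
          rw [convPow_succ]; exact eDNorm_seqConv_le a (convPow a (n + 1))
      _ ≤ eDNorm a * eWNorm a ^ (n + 1) + eWNorm a * ((n + 1) * eWNorm a ^ n * eDNorm a) := by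
          gcongr
          exact eWNorm_convPow_le a (n + 1)
      _ = (↑(n + 1) + 1) * eWNorm a ^ (n + 1) * eDNorm a := by push_cast; ring

end Conv

lemma eFNorm_eq_tsum_tsum (B : ℕ → ℕ → ℂ) : eFNorm B = ∑' k, ∑' q, ‖B k q‖ₑ :=
  ENNReal.tsum_prod (f := fun k q => ‖B k q‖ₑ)

lemma eFNorm_sub_le (A B : ℕ → ℕ → ℂ) :
    eFNorm (fun p q => A p q - B p q) ≤ eFNorm A + eFNorm B := by
  rw [eFNorm, eFNorm, eFNorm, ← ENNReal.tsum_add]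
  exact ENNReal.tsum_le_tsum fun _ => enorm_sub_le

lemma eFNorm_tMul_le (A B : ℕ → ℕ → ℂ) :
    eFNorm (tMul A B) ≤ ∑' k, (∑' p, ‖A p k‖ₑ) * ∑' q, ‖B k q‖ₑ :=
  calc eFNorm (tMul A B)
      ≤ ∑' p, ∑' q, ∑' k, ‖A p k‖ₑ * ‖B k q‖ₑ := by
        rw [eFNorm_eq_tsum_tsum]
        gcongr with p q
        simpa only [tMul, enorm_mul] using enorm_tsum_le_tsum_enorm (f := fun k => A p k * B k q)
    _ = ∑' k, (∑' p, ‖A p k‖ₑ) * ∑' q, ‖B k q‖ₑ := by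
        simp_rw [← ENNReal.tsum_mul_right, ← ENNReal.tsum_mul_left]
        conv_lhs => enter [1, p]; rw [ENNReal.tsum_comm]
        exact ENNReal.tsum_comm

lemma eFNorm_toep_tMul_le (a : ℤ → ℂ) (B : ℕ → ℕ → ℂ) :
    eFNorm (tMul (Toep a) B) ≤ eWNorm a * eFNorm B := by
  have hcol (k : ℕ) : ∑' p : ℕ, ‖Toep a p k‖ₑ ≤ eWNorm a :=
    ENNReal.tsum_comp_le_tsum_of_injective (fun p p' h => by simpa using h) (‖a ·‖ₑ)
  calc eFNorm (tMul (Toep a) B)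
      ≤ ∑' k, (∑' p, ‖Toep a p k‖ₑ) * ∑' q, ‖B k q‖ₑ := eFNorm_tMul_le _ _
    _ ≤ ∑' k, eWNorm a * ∑' q, ‖B k q‖ₑ := by gcongr with k; exact hcol k
    _ = eWNorm a * eFNorm B := by rw [ENNReal.tsum_mul_left, eFNorm_eq_tsum_tsum]

lemma tsum_prod_comp_add (f : ℕ → ℝ≥0∞) :
    ∑' x : ℕ × ℕ, f (x.1 + x.2) = ∑' n, (n + 1) * f n := by
  rw [← Finset.HasAntidiagonal.sigmaAntidiagonalEquivProd.tsum_eq, ENNReal.tsum_sigma']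
  refine tsum_congr fun n => ?_
  have hsum (x : Finset.HasAntidiagonal.antidiagonal n) : x.1.1 + x.1.2 = n :=
    Finset.HasAntidiagonal.mem_antidiagonal.1 x.2
  simp [tsum_fintype, hsum]

lemma tsum_tsum_enorm_hankM_le (a : ℤ → ℂ) :
    ∑' k, ∑' p, ‖HankM a p k‖ₑ ≤ eDNorm a := by
  have hinj : Function.Injective fun n : ℕ => -((n : ℤ) + 1) := fun n n' h => by simpa using h
  calc ∑' k, ∑' p, ‖HankM a p k‖ₑ = ∑' n : ℕ, (n + 1) * ‖a (-((n : ℤ) + 1))‖ₑ := by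
        rw [ENNReal.tsum_comm, ← ENNReal.tsum_prod (f := fun p k => ‖HankM a p k‖ₑ),
          ← tsum_prod_comp_add fun n => ‖a (-((n : ℤ) + 1))‖ₑ]
        simp [HankM]
    _ = ∑' n : ℕ, ‖-((n : ℤ) + 1)‖ₑ * ‖a (-((n : ℤ) + 1))‖ₑ := by
        refine tsum_congr fun n => ?_
        rw [enorm_neg, ← Nat.cast_succ (R := ℤ), Int.enorm_natCast]
        norm_cast
    _ ≤ eDNorm a := ENNReal.tsum_comp_le_tsum_of_injective hinj (fun m => ‖m‖ₑ * ‖a m‖ₑ)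

lemma tsum_enorm_hankP_le (b : ℤ → ℂ) (k : ℕ) : ∑' q, ‖HankP b k q‖ₑ ≤ eDNorm b := by
  have hinj : Function.Injective fun q : ℕ => (k : ℤ) + q + 1 := fun q q' h => by simpa using h
  calc ∑' q, ‖HankP b k q‖ₑ ≤ ∑' q : ℕ, ‖(k : ℤ) + q + 1‖ₑ * ‖b ((k : ℤ) + q + 1)‖ₑ := by
        gcongr with q
        refine le_mul_of_one_le_left zero_le ?_
        rw [← Nat.cast_add, ← Nat.cast_succ, Int.enorm_natCast]
        exact_mod_cast Nat.succ_pos _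
    _ ≤ eDNorm b := ENNReal.tsum_comp_le_tsum_of_injective hinj (fun m => ‖m‖ₑ * ‖b m‖ₑ)

lemma eFNorm_hankM_tMul_hankP_le (a b : ℤ → ℂ) :
    eFNorm (tMul (HankM a) (HankP b)) ≤ eDNorm a * eDNorm b :=
  calc eFNorm (tMul (HankM a) (HankP b))
      ≤ ∑' k, (∑' p, ‖HankM a p k‖ₑ) * ∑' q, ‖HankP b k q‖ₑ := eFNorm_tMul_le _ _
    _ ≤ ∑' k, (∑' p, ‖HankM a p k‖ₑ) * eDNorm b := by
        gcongr with k; exact tsum_enorm_hankP_le b k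
    _ ≤ eDNorm a * eDNorm b := by
        rw [ENNReal.tsum_mul_right]; gcongr; exact tsum_tsum_enorm_hankM_le a

lemma eFNorm_correction_le (a : ℤ → ℂ) (E : ℕ → ℕ → ℕ → ℂ) (hE1 : E 1 = fun _ _ => 0)
    (hErec : ∀ i : ℕ, 2 ≤ i →
      E i = fun p q =>
        tMul (Toep a) (E (i - 1)) p q - tMul (HankM a) (HankP (convPow a (i - 1))) p q)
    (n : ℕ) :
    eFNorm (E (n + 1)) ≤ (n + 1).choose 2 * eDNorm a ^ 2 * eWNorm a ^ (n - 1) := by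
  induction n with
  | zero => simp [hE1, eFNorm]
  | succ n ih =>
    have hpow : ((n + 1).choose 2 : ℝ≥0∞) * (eWNorm a * eWNorm a ^ (n - 1))
        = (n + 1).choose 2 * eWNorm a ^ n := by
      cases n with
      | zero => simp
      | succ n => rw [← pow_succ', Nat.add_sub_cancel]
    calc eFNorm (E (n + 2))
        ≤ eFNorm (tMul (Toep a) (E (n + 1)))
          + eFNorm (tMul (HankM a) (HankP (convPow a (n + 1)))) := by
          rw [hErec (n + 2) (by omega)]
          exact eFNorm_sub_le _ _
      _ ≤ eWNorm a * eFNorm (E (n + 1)) + eDNorm a * eDNorm (convPow a (n + 1)) :=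
          add_le_add (eFNorm_toep_tMul_le a _) (eFNorm_hankM_tMul_hankP_le a _)
      _ ≤ eWNorm a * ((n + 1).choose 2 * eDNorm a ^ 2 * eWNorm a ^ (n - 1))
          + eDNorm a * ((n + 1) * eWNorm a ^ n * eDNorm a) := by
          gcongr
          exact eDNorm_convPow_le a n
      _ = (n + 2).choose 2 * eDNorm a ^ 2 * eWNorm a ^ (n + 1 - 1) := by
          have hchoose : (n + 2).choose 2 = (n + 1).choose 2 + (n + 1) := by
            rw [Nat.choose_succ_succ' (n + 1) 1, Nat.choose_one_right, add_comm]
          rw [hchoose, Nat.cast_add, Nat.cast_succ n, Nat.add_sub_cancel]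
          calc _ = eDNorm a ^ 2 * ((n + 1).choose 2 * (eWNorm a * eWNorm a ^ (n - 1)))
                + (n + 1) * eDNorm a ^ 2 * eWNorm a ^ n := by ring
            _ = _ := by rw [hpow]; ring

lemma wNorm_eq_toReal (a : ℤ → ℂ) : wNorm a = (eWNorm a).toReal := by
  rw [eWNorm, ENNReal.tsum_toReal_eq fun _ => enorm_ne_top, wNorm]
  simp only [toReal_enorm]

lemma dNorm_eq_toReal (a : ℤ → ℂ) : dNorm a = (eDNorm a).toReal := by
  rw [eDNorm, ENNReal.tsum_toReal_eq fun _ => ENNReal.mul_ne_top enorm_ne_top enorm_ne_top, dNorm]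
  simp only [ENNReal.toReal_mul, toReal_enorm, Int.norm_eq_abs]

lemma fNorm_eq_toReal (B : ℕ → ℕ → ℂ) : fNorm B = (eFNorm B).toReal := by
  rw [eFNorm, ENNReal.tsum_toReal_eq fun _ => enorm_ne_top, fNorm]
  simp only [toReal_enorm]

lemma eWNorm_ne_top {a : ℤ → ℂ} (ha : Summable fun i : ℤ => ‖a i‖) : eWNorm a ≠ ⊤ := by
  rw [eWNorm]
  simp_rw [← ofReal_norm]
  rw [← ENNReal.ofReal_tsum_of_nonneg (fun _ => norm_nonneg _) ha]
  exact ENNReal.ofReal_ne_top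

lemma eDNorm_ne_top {a : ℤ → ℂ} (ha' : Summable fun i : ℤ => |(i : ℝ)| * ‖a i‖) :
    eDNorm a ≠ ⊤ := by
  rw [eDNorm]
  simp_rw [← ofReal_norm, ← ENNReal.ofReal_mul (norm_nonneg _), Int.norm_eq_abs]
  rw [← ENNReal.ofReal_tsum_of_nonneg (fun _ => by positivity) ha']
  exact ENNReal.ofReal_ne_top

/-- For `a ∈ W₁`, writing `T(a)^i = T(a^i) + E_i` with `E_1 = 0` and
`E_i = T(a) E_{i-1} − H(a⁻) H((a^{i-1})⁺)` for `i ≥ 2`, one has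
`‖E_i‖_F ≤ (i(i−1)/2)‖a'‖_W² ‖a‖_W^{i−2}`. -/
theorem correction_bound (a : ℤ → ℂ)
    (ha : Summable fun i : ℤ => ‖a i‖)
    (ha' : Summable fun i : ℤ => |(i : ℝ)| * ‖a i‖)
    (E : ℕ → ℕ → ℕ → ℂ)
    (hE1 : E 1 = fun _ _ => 0)
    (hErec : ∀ i : ℕ, 2 ≤ i →
      E i = fun p q =>
        tMul (Toep a) (E (i - 1)) p q - tMul (HankM a) (HankP (convPow a (i - 1))) p q) :
    ∀ i : ℕ, 1 ≤ i →
      fNorm (E i) ≤ (i * (i - 1) : ℝ) / 2 * dNorm a ^ 2 * wNorm a ^ (i - 2) := by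
  intro i hi
  obtain ⟨n, rfl⟩ := Nat.exists_eq_add_of_le' hi
  have hbound := eFNorm_correction_le a E hE1 hErec n
  have hW := eWNorm_ne_top ha
  have hD := eDNorm_ne_top ha'
  rw [fNorm_eq_toReal, dNorm_eq_toReal, wNorm_eq_toReal, ← Nat.cast_choose_two,
    show n + 1 - 2 = n - 1 by omega]
  calc (eFNorm (E (n + 1))).toReal
      ≤ ((n + 1).choose 2 * eDNorm a ^ 2 * eWNorm a ^ (n - 1)).toReal :=
        ENNReal.toReal_mono (by finiteness) hbound
    _ = _ := by simp only [ENNReal.toReal_mul, ENNReal.toReal_pow, ENNReal.toReal_natCast]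
end

section
/- Let m ≥ 1 and let a(z) = Σ_{i=−m+1}^{m−1} a_i z^i, b(z) = Σ_{i=−m+1}^{m−1} b_i z^i be Laurent polynomials with product c(z) = a(z)b(z) = Σ_{i=−2m+2}^{2m−2} c_i z^i. Then the m×m matrices satisfy T_m(a)T_m(b) = T_m(c) − H_m(a⁻)H_m(b⁺) − J H_m(a⁺) H_m(b⁻) J, where J is the m×m flip (anti-identity) matrix. -/
open Matrix

lemma sum_range_eq_Icc' (m : ℕ) (f : ℤ → ℂ) :
    ∑ k ∈ Finset.range m, f k = ∑ k ∈ Finset.Icc (0:ℤ) ((m:ℤ)-1), f k := by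
  refine Finset.sum_nbij' (fun k => (k:ℤ)) (fun k => k.toNat) ?_ ?_ ?_ ?_ ?_ <;>
    intros x hx <;> simp_all <;> omega

lemma key_split (m : ℕ) (a b : ℤ → ℂ)
    (ha : ∀ i : ℤ, (m : ℤ) ≤ |i| → a i = 0) (i j : ℤ) (hi : 0 ≤ i) (hi' : i < m) :
    ∑ k ∈ Finset.Icc (-(m:ℤ) + 1) ((m:ℤ) - 1), a k * b (j - i - k)
      = (∑ k ∈ Finset.Icc (-(m:ℤ)) (-1), a (k - i) * b (j - k))
        + (∑ k ∈ Finset.Icc (0:ℤ) ((m:ℤ)-1), a (k - i) * b (j - k))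
        + (∑ k ∈ Finset.Icc (m:ℤ) (2*(m:ℤ)-1), a (k - i) * b (j - k)) := by
  have hstep1 : ∑ k ∈ Finset.Icc (-(m:ℤ) + 1) ((m:ℤ) - 1), a k * b (j - i - k)
      = ∑ k ∈ Finset.Icc (i - (m:ℤ) + 1) (i + (m:ℤ) - 1), a (k - i) * b (j - k) := by
    refine Finset.sum_nbij' (fun k => k + i) (fun k => k - i) ?_ ?_ ?_ ?_ ?_
    · intro x hx; simp_all; omega
    · intro x hx; simp_all; omega
    · intro x hx; ring
    · intro x hx; ring
    · intro x hx; ring_nf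
  have hstep2 : ∑ k ∈ Finset.Icc (i - (m:ℤ) + 1) (i + (m:ℤ) - 1), a (k - i) * b (j - k)
      = ∑ k ∈ Finset.Icc (-(m:ℤ)) (2*(m:ℤ)-1), a (k - i) * b (j - k) := by
    refine Finset.sum_subset ?_ ?_
    · intro x hx; simp_all; omega
    · intro x hx hx'
      simp only [Finset.mem_Icc] at hx hx'
      have : a (x - i) = 0 := by apply ha; rw [le_abs]; omega
      simp [this]
  have hsplit : Finset.Icc (-(m:ℤ)) (2*(m:ℤ)-1)
      = (Finset.Icc (-(m:ℤ)) (-1) ∪ Finset.Icc (0:ℤ) ((m:ℤ)-1)) ∪ Finset.Icc (m:ℤ) (2*(m:ℤ)-1) := by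
    ext x; simp; omega
  have hd1 : Disjoint (Finset.Icc (-(m:ℤ)) (-1)) (Finset.Icc (0:ℤ) ((m:ℤ)-1)) := by
    rw [Finset.disjoint_left]; intro x; simp; omega
  have hd2 : Disjoint (Finset.Icc (-(m:ℤ)) (-1) ∪ Finset.Icc (0:ℤ) ((m:ℤ)-1))
      (Finset.Icc (m:ℤ) (2*(m:ℤ)-1)) := by
    rw [Finset.disjoint_left]; intro x; simp; omega
  rw [hstep1, hstep2, hsplit, Finset.sum_union hd2, Finset.sum_union hd1]

/-- Finite Toeplitz multiplication: for Laurent polynomials `a, b` of degree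
less than `m` with product `c`, one has
`T_m(a)T_m(b) = T_m(c) − H_m(a⁻)H_m(b⁺) − J H_m(a⁺) H_m(b⁻) J` where `J` is the
`m×m` flip matrix. Indices below are 0-based: entry `(i,j)` corresponds to the
classical `(i+1, j+1)`. -/
theorem finite_toeplitz_mul (m : ℕ) (hm : 1 ≤ m) (a b : ℤ → ℂ)
    (ha : ∀ i : ℤ, (m : ℤ) ≤ |i| → a i = 0)
    (hb : ∀ i : ℤ, (m : ℤ) ≤ |i| → b i = 0)
    (c : ℤ → ℂ)
    (hc : ∀ k : ℤ, c k = ∑ i ∈ Finset.Icc (-(m : ℤ) + 1) ((m : ℤ) - 1), a i * b (k - i)) :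
    let T : (ℤ → ℂ) → Matrix (Fin m) (Fin m) ℂ := fun f =>
      Matrix.of fun i j => f ((j : ℤ) - (i : ℤ))
    let Hp : (ℤ → ℂ) → Matrix (Fin m) (Fin m) ℂ := fun f =>
      Matrix.of fun i j => f ((i : ℤ) + (j : ℤ) + 1)
    let Hm' : (ℤ → ℂ) → Matrix (Fin m) (Fin m) ℂ := fun f =>
      Matrix.of fun i j => f (-((i : ℤ) + (j : ℤ) + 1))
    let J : Matrix (Fin m) (Fin m) ℂ :=
      Matrix.of fun i j => if (i : ℕ) + (j : ℕ) + 1 = m then 1 else 0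
    T a * T b = T c - Hm' a * Hp b - J * Hp a * Hm' b * J := by
  intro T Hp Hm' J
  have hJentry : ∀ i k : Fin m, J i k = if k = Fin.rev i then 1 else 0 := by
    intro i k
    have hrev : (Fin.rev i : Fin m).val = m - (i.val + 1) := Fin.val_rev i
    have : ((i : ℕ) + (k : ℕ) + 1 = m) ↔ k = Fin.rev i := by
      constructor
      · intro h; apply Fin.ext; omega
      · intro h; subst h; have := i.isLt; omega
    simp only [J, Matrix.of_apply, this]
  have hJl : ∀ M : Matrix (Fin m) (Fin m) ℂ, J * M = M.submatrix Fin.rev id := by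
    intro M; ext i k
    simp [Matrix.mul_apply, hJentry, ite_mul, Finset.sum_ite_eq']
  have hJr : ∀ M : Matrix (Fin m) (Fin m) ℂ, M * J = M.submatrix id Fin.rev := by
    intro M; ext i k
    have : ∀ l : Fin m, J l k = if l = Fin.rev k then 1 else 0 := by
      intro l
      rw [hJentry l k]
      congr 1
      simp only [eq_iff_iff]
      constructor <;> intro h <;> subst h <;> simp [Fin.rev_rev]
    simp [Matrix.mul_apply, this, mul_ite, Finset.sum_ite_eq']
  rw [hJl, hJr]
  ext i j
  have hi := i.isLt
  have hj := j.isLt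
  have hri : (((Fin.rev i : Fin m) : ℕ) : ℤ) = (m : ℤ) - 1 - (i : ℕ) := by
    rw [Fin.val_rev]; omega
  have hrj : (((Fin.rev j : Fin m) : ℕ) : ℤ) = (m : ℤ) - 1 - (j : ℕ) := by
    rw [Fin.val_rev]; omega
  simp only [Matrix.sub_apply, Matrix.mul_apply, Matrix.submatrix_apply, id_eq,
    T, Hp, Hm', Matrix.of_apply, hri, hrj]
  have e1 : ∑ k : Fin m, a ((k : ℤ) - (i : ℤ)) * b ((j : ℤ) - (k : ℤ))
      = ∑ k ∈ Finset.Icc (0:ℤ) ((m:ℤ)-1), a (k - (i:ℤ)) * b ((j:ℤ) - k) := by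
    rw [Fin.sum_univ_eq_sum_range (fun t : ℕ => a ((t:ℤ) - (i:ℤ)) * b ((j:ℤ) - (t:ℤ))),
      sum_range_eq_Icc' m (fun t => a (t - (i:ℤ)) * b ((j:ℤ) - t))]
  have e2 : ∑ k : Fin m, a (-((i : ℤ) + (k : ℤ) + 1)) * b ((k : ℤ) + (j : ℤ) + 1)
      = ∑ k ∈ Finset.Icc (-(m:ℤ)) (-1), a (k - (i:ℤ)) * b ((j:ℤ) - k) := by
    rw [Fin.sum_univ_eq_sum_range (fun t : ℕ => a (-((i:ℤ) + (t:ℤ) + 1)) * b ((t:ℤ) + (j:ℤ) + 1)),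
      sum_range_eq_Icc' m (fun t => a (-((i:ℤ) + t + 1)) * b (t + (j:ℤ) + 1))]
    refine Finset.sum_nbij' (fun t => -(t+1)) (fun k => -(k+1)) ?_ ?_ ?_ ?_ ?_
    · intro x hx; simp_all
    · intro x hx; simp_all; omega
    · intro x hx; ring
    · intro x hx; ring
    · intro x hx; ring_nf
  have e3 : ∑ k : Fin m, a ((m:ℤ) - 1 - (i : ℕ) + (k : ℤ) + 1) * b (-((k : ℤ) + ((m:ℤ) - 1 - (j : ℕ)) + 1))
      = ∑ k ∈ Finset.Icc (m:ℤ) (2*(m:ℤ)-1), a (k - (i:ℤ)) * b ((j:ℤ) - k) := by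
    rw [Fin.sum_univ_eq_sum_range
      (fun t : ℕ => a ((m:ℤ) - 1 - (i:ℕ) + (t:ℤ) + 1) * b (-((t:ℤ) + ((m:ℤ) - 1 - (j:ℕ)) + 1))),
      sum_range_eq_Icc' m (fun t => a ((m:ℤ) - 1 - (i:ℕ) + t + 1) * b (-(t + ((m:ℤ) - 1 - (j:ℕ)) + 1)))]
    refine Finset.sum_nbij' (fun t => t + m) (fun k => k - m) ?_ ?_ ?_ ?_ ?_
    · intro x hx; simp_all; omega
    · intro x hx; simp_all; omega
    · intro x hx; ring
    · intro x hx; ring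
    · intro x hx; ring_nf
  rw [e1, e2, e3, hc ((j:ℤ) - (i:ℤ)),
    key_split m a b ha (i:ℤ) (j:ℤ) (by positivity) (by exact_mod_cast hi)]
  ring
end
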